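/- Let D be an integer with D > 2, let η be a nondegenerate symmetric real D×D matrix, and let k : ℝ^D → ℝ^D be a smooth vector field satisfying the flat conformal Killing equation ∂_μ k_ν + ∂_ν k_μ = (2/D) η_{μν} Σ_ρ ∂_ρ k^ρ on all of ℝ^D, where k_μ := Σ_ν η_{μν} k^ν. Then k is a quadratic polynomial of conformal type: there exist a vector ξ ∈ ℝ^D, a matrix λ with λ_{μν} := η_{μρ} λ^ρ{}_ν antisymmetric, a scalar λ_D ∈ ℝ, and a vector Λ_K ∈ ℝ^D such that for all x ∈ ℝ^D, k^μ(x) = ξ^μ + Σ_ν λ^μ{}_ν x^ν + λ_D x^μ + (x·x) Λ_K^μ − 2 x^μ (x·Λ_K), where x·y := Σ_{μ,ν} η_{μν} x^μ y^ν. (These are translations, Lorentz rotations, dilatations and special conformal transformations.) -/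

import Mathlib

/-!
Lowering the index, `f_ν = η_{νσ} k^σ` satisfies `∂_μ f_ν + ∂_ν f_μ = η_{μν} ψ`. Combining three
instances of the differentiated equation and using symmetry of mixed partials gives
`2 ∂_μ ∂_ν f_ρ = η_{νρ} ∂_μ ψ + η_{ρμ} ∂_ν ψ - η_{μν} ∂_ρ ψ`. Differentiating once more and
exchanging two derivatives shows that the Hessian `H` of `ψ` satisfies
`η_{νρ} H_{σμ} - η_{μν} H_{σρ} = η_{σρ} H_{νμ} - η_{μσ} H_{νρ}`; contracting with `η⁻¹` gives
`(D - 2) H = -η tr H` and then `(2D - 2) tr H = 0`, so `H = 0` as `D > 2`. Thus `∇ψ` is constant,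
each `f_ρ` has constant second derivatives and is the quadratic polynomial read off from the
formula above, and raising the index with `η⁻¹` gives `k`.
-/

noncomputable section

/-- Partial derivative `∂_i f` of a scalar function on `ℝ^D`. -/
def pd {D : ℕ} (i : Fin D) (f : (Fin D → ℝ) → ℝ) (x : Fin D → ℝ) : ℝ :=
  fderiv ℝ f x (Pi.single i 1)

open scoped ContDiff
open Matrix

section Smoothness

variable {E : Type*} [NormedAddCommGroup E] [NormedSpace ℝ E] {ι : Type*} [Fintype ι]
  {f g : E → ι → ℝ} {x : E}

@[fun_prop]
theorem DifferentiableAt.dotProduct (hf : DifferentiableAt ℝ f x) (hg : DifferentiableAt ℝ g x) :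
    DifferentiableAt ℝ (fun y => f y ⬝ᵥ g y) x := by
  simp only [_root_.dotProduct]
  fun_prop

@[fun_prop]
theorem DifferentiableAt.mulVec (C : Matrix ι ι ℝ) (hf : DifferentiableAt ℝ f x) :
    DifferentiableAt ℝ (fun y => C *ᵥ f y) x :=
  differentiableAt_pi.2 fun i => (differentiableAt_const (C i)).dotProduct hf

@[fun_prop]
theorem Differentiable.dotProduct (hf : Differentiable ℝ f) (hg : Differentiable ℝ g) :
    Differentiable ℝ (fun y => f y ⬝ᵥ g y) := fun x => (hf x).dotProduct (hg x)

@[fun_prop]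
theorem Differentiable.mulVec (C : Matrix ι ι ℝ) (hf : Differentiable ℝ f) :
    Differentiable ℝ (fun y => C *ᵥ f y) := fun x => (hf x).mulVec C

end Smoothness

section PartialDerivatives

variable {D : ℕ}

theorem ContDiff.pd {f : (Fin D → ℝ) → ℝ} (hf : ContDiff ℝ ∞ f) (i : Fin D) :
    ContDiff ℝ ∞ (pd i f) :=
  (ContinuousLinearMap.apply ℝ ℝ (Pi.single i 1)).contDiff.comp (hf.fderiv_right (by simp))

theorem pd_add {f g : (Fin D → ℝ) → ℝ} {x : Fin D → ℝ} (hf : DifferentiableAt ℝ f x)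
    (hg : DifferentiableAt ℝ g x) (i : Fin D) :
    pd i (fun y => f y + g y) x = pd i f x + pd i g x := by
  simp [pd, fderiv_fun_add hf hg]

theorem pd_sub {f g : (Fin D → ℝ) → ℝ} {x : Fin D → ℝ} (hf : DifferentiableAt ℝ f x)
    (hg : DifferentiableAt ℝ g x) (i : Fin D) :
    pd i (fun y => f y - g y) x = pd i f x - pd i g x := by
  simp [pd, fderiv_fun_sub hf hg]

theorem pd_const_mul {f : (Fin D → ℝ) → ℝ} {x : Fin D → ℝ} (hf : DifferentiableAt ℝ f x)
    (c : ℝ) (i : Fin D) : pd i (fun y => c * f y) x = c * pd i f x := by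
  simp [pd, fderiv_const_mul hf c]

theorem pd_mul {f g : (Fin D → ℝ) → ℝ} {x : Fin D → ℝ} (hf : DifferentiableAt ℝ f x)
    (hg : DifferentiableAt ℝ g x) (i : Fin D) :
    pd i (fun y => f y * g y) x = f x * pd i g x + g x * pd i f x := by
  simp [pd, fderiv_fun_mul hf hg]

theorem pd_sum {ι : Type*} (s : Finset ι) {f : ι → (Fin D → ℝ) → ℝ} {x : Fin D → ℝ}
    (hf : ∀ j ∈ s, DifferentiableAt ℝ (f j) x) (i : Fin D) :
    pd i (fun y => ∑ j ∈ s, f j y) x = ∑ j ∈ s, pd i (f j) x := by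
  simp [pd, fderiv_fun_sum hf]

theorem pd_apply (i j : Fin D) (x : Fin D → ℝ) :
    pd i (fun y => y j) x = if j = i then 1 else 0 := by
  change fderiv ℝ (ContinuousLinearMap.proj j : (Fin D → ℝ) →L[ℝ] ℝ) x (Pi.single i 1) = _
  simp [Pi.single_apply]

theorem pd_comm {f : (Fin D → ℝ) → ℝ} (hf : ContDiff ℝ ∞ f) (i j : Fin D) (x : Fin D → ℝ) :
    pd i (pd j f) x = pd j (pd i f) x := by
  have hf' : Differentiable ℝ (fderiv ℝ f) :=
    (hf.fderiv_right (m := ∞) (by simp)).differentiable (by simp)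
  have hsymm : IsSymmSndFDerivAt ℝ f x :=
    hf.contDiffAt.isSymmSndFDerivAt (by rw [minSmoothness_of_isRCLikeNormedField]; norm_cast)
  show fderiv ℝ (fun y => fderiv ℝ f y (Pi.single j 1)) x (Pi.single i 1)
    = fderiv ℝ (fun y => fderiv ℝ f y (Pi.single i 1)) x (Pi.single j 1)
  simp only [fderiv_clm_apply (hf' x) (differentiableAt_const _)]
  simpa using hsymm.eq (Pi.single i 1) (Pi.single j 1)

theorem pd_pd_pd_comm {g : (Fin D → ℝ) → ℝ} (hg : ContDiff ℝ ∞ g) (i j k : Fin D)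
    (x : Fin D → ℝ) : pd i (pd j (pd k g)) x = pd k (pd j (pd i g)) x := by
  rw [show pd j (pd k g) = pd k (pd j g) from funext (pd_comm hg j k), pd_comm (hg.pd j),
    show pd j (pd i g) = pd i (pd j g) from funext (pd_comm hg j i)]

theorem eq_of_pd_eq_zero {g : (Fin D → ℝ) → ℝ} (hg : Differentiable ℝ g)
    (h : ∀ i x, pd i g x = 0) (x y : Fin D → ℝ) : g x = g y := by
  refine is_const_of_fderiv_eq_zero hg (fun z => ?_) x y
  refine ContinuousLinearMap.coe_injective (LinearMap.pi_ext fun i t => ?_)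
  rw [← mul_one t, ← smul_eq_mul, Pi.single_smul', ContinuousLinearMap.coe_coe, map_smul]
  change t • pd i g z = _
  simp [h]

theorem pd_dotProduct (a : Fin D → ℝ) (i : Fin D) (x : Fin D → ℝ) :
    pd i (fun y => a ⬝ᵥ y) x = a i := by
  simp only [dotProduct]
  rw [pd_sum _ fun j _ => by fun_prop]
  simp [pd_const_mul, pd_apply, differentiableAt_apply]

theorem pd_dotProduct_mulVec (C : Matrix (Fin D) (Fin D) ℝ) (i : Fin D) (x : Fin D → ℝ) :
    pd i (fun y => y ⬝ᵥ C *ᵥ y) x = (C *ᵥ x) i + (x ᵥ* C) i := by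
  have hC : ∀ a, DifferentiableAt ℝ (fun y => (C *ᵥ y) a) x := fun a => by fun_prop
  simp only [dotProduct]
  rw [pd_sum (f := fun j y => y j * (C *ᵥ y) j) _
    fun j _ => (differentiableAt_apply j x).mul (hC j)]
  have hterm : ∀ j, pd i (fun y => y j * (C *ᵥ y) j) x
      = x j * C j i + (C *ᵥ x) j * if j = i then 1 else 0 := fun j => by
    rw [pd_mul (differentiableAt_apply j x) (hC j), pd_apply]
    exact congrArg (x j * · + _) (pd_dotProduct (C j) i x)
  simp [hterm, Finset.sum_add_distrib, vecMul, dotProduct, add_comm]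

theorem sub_eq_sub_of_pd_eq {g h : (Fin D → ℝ) → ℝ} (hg : Differentiable ℝ g)
    (hh : Differentiable ℝ h) (hgh : ∀ i x, pd i g x = pd i h x) (x y : Fin D → ℝ) :
    g x - g y = h x - h y := by
  have := eq_of_pd_eq_zero (g := fun z => g z - h z) (hg.sub hh)
    (fun i z => by rw [pd_sub (hg z) (hh z), hgh, sub_self]) x y
  linarith

theorem eq_quadratic_of_pd_pd_eq {g : (Fin D → ℝ) → ℝ} (hg : ContDiff ℝ ∞ g)
    (C : Matrix (Fin D) (Fin D) ℝ) (hC : ∀ i j x, pd i (pd j g) x = C i j) (x : Fin D → ℝ) :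
    g x = g 0 + (fun j => pd j g 0) ⬝ᵥ x + (1 / 2) * (x ⬝ᵥ C *ᵥ x) := by
  have hCsymm (i j : Fin D) : C i j = C j i := by rw [← hC i j 0, pd_comm hg, hC]
  have hvecMul (y : Fin D → ℝ) : y ᵥ* C = C *ᵥ y := by
    rw [← vecMul_transpose, show Cᵀ = C from Matrix.ext fun i j => hCsymm j i]
  have hgrad (j : Fin D) (y : Fin D → ℝ) : pd j g y = pd j g 0 + (C *ᵥ y) j := by
    have := sub_eq_sub_of_pd_eq ((hg.pd j).differentiable (by simp))
      (h := fun y => C j ⬝ᵥ y) (by fun_prop)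
      (fun i z => by rw [hC, pd_dotProduct, hCsymm]) y 0
    simp only [dotProduct_zero, sub_zero] at this
    rw [mulVec, ← this]
    ring
  have := sub_eq_sub_of_pd_eq (hg.differentiable (by simp))
    (h := fun y => (fun j => pd j g 0) ⬝ᵥ y + (1 / 2) * (y ⬝ᵥ C *ᵥ y)) (by fun_prop)
    (fun i y => by
      rw [pd_add (by fun_prop) (by fun_prop), pd_const_mul (by fun_prop), pd_dotProduct,
        pd_dotProduct_mulVec, hvecMul, hgrad]
      ring) x 0
  simp only [dotProduct_zero, mulVec_zero, mul_zero, add_zero, sub_zero] at this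
  linarith

end PartialDerivatives

section LinearAlgebra

theorem dotProduct_mulVec_eq_sum_sum {ι R : Type*} [Fintype ι] [CommSemiring R] (M : Matrix ι ι R)
    (x y : ι → R) : x ⬝ᵥ M *ᵥ y = ∑ a, ∑ b, M a b * x a * y b := by
  simp only [dotProduct, mulVec, Finset.mul_sum]
  exact Finset.sum_congr rfl fun _ _ => Finset.sum_congr rfl fun _ _ => by ring

variable {ι : Type*} [Fintype ι] [DecidableEq ι] {A B : Matrix ι ι ℝ}

theorem sum_sum_mul_mul_eq_of_mul_eq_one (h : A * B = 1) (v : ι → ℝ) (μ : ι) :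
    ∑ ν, ∑ ρ, B ν ρ * (A μ ν * v ρ) = v μ := by
  calc ∑ ν, ∑ ρ, B ν ρ * (A μ ν * v ρ) = (A *ᵥ (B *ᵥ v)) μ := by
        simp only [mulVec, dotProduct, Finset.mul_sum]
        exact Finset.sum_congr rfl fun _ _ => Finset.sum_congr rfl fun _ _ => by ring
    _ = v μ := by rw [mulVec_mulVec, h, one_mulVec]

theorem sum_sum_mul_eq_card_of_mul_transpose_eq_one (h : B * Aᵀ = 1) :
    ∑ ν, ∑ ρ, B ν ρ * A ν ρ = Fintype.card ι := by
  simpa [trace, Matrix.mul_apply] using congrArg trace h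

theorem eq_zero_of_exchange_symm {η H : Matrix ι ι ℝ} (hcard : 2 < Fintype.card ι)
    (hη : ∀ μ ν, η μ ν = η ν μ) (hdet : IsUnit η.det)
    (hH : ∀ σ μ ν ρ, η ν ρ * H σ μ - η μ ν * H σ ρ = η σ ρ * H ν μ - η μ σ * H ν ρ) :
    H = 0 := by
  set G := η⁻¹
  have hηT : ηᵀ = η := Matrix.ext fun i j => hη j i
  have hηG : η * G = 1 := mul_nonsing_inv η hdet
  have hGηT : G * ηᵀ = 1 := by rw [hηT]; exact nonsing_inv_mul η hdet
  have hηGT : η * Gᵀ = 1 := by rw [transpose_nonsing_inv, hηT, hηG]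
  set t := ∑ ν, ∑ ρ, G ν ρ * H ν ρ
  have hcontract (σ μ : ι) : ((Fintype.card ι : ℝ) - 2) * H σ μ = - η σ μ * t := by
    have h : ∑ ν, ∑ ρ, G ν ρ * (η ν ρ * H σ μ - η μ ν * H σ ρ)
        = ∑ ν, ∑ ρ, G ν ρ * (η σ ρ * H ν μ - η μ σ * H ν ρ) := by simp only [hH]
    simp only [mul_sub, Finset.sum_sub_distrib] at h
    have hdiag : ∑ ν, ∑ ρ, G ν ρ * (η ν ρ * H σ μ) = Fintype.card ι * H σ μ := by
      simp only [← mul_assoc, ← Finset.sum_mul, sum_sum_mul_eq_card_of_mul_transpose_eq_one hGηT]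
    have hswap : ∑ ν, ∑ ρ, G ν ρ * (η σ ρ * H ν μ) = H σ μ := by
      rw [Finset.sum_comm]
      exact sum_sum_mul_mul_eq_of_mul_eq_one hηGT (fun ν => H ν μ) σ
    have hconst : ∑ ν, ∑ ρ, G ν ρ * (η μ σ * H ν ρ) = η σ μ * t := by
      simp only [t, Finset.mul_sum, mul_left_comm, hη μ σ]
    rw [hdiag, sum_sum_mul_mul_eq_of_mul_eq_one hηG (H σ) μ, hswap, hconst] at h
    linarith
  have ht : ((Fintype.card ι : ℝ) - 2) * t = -(Fintype.card ι * t) := by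
    have h : ∑ σ, ∑ μ, G σ μ * (((Fintype.card ι : ℝ) - 2) * H σ μ)
        = ∑ σ, ∑ μ, G σ μ * (- η σ μ * t) := by simp only [hcontract]
    have hl : ∑ σ, ∑ μ, G σ μ * (((Fintype.card ι : ℝ) - 2) * H σ μ)
        = ((Fintype.card ι : ℝ) - 2) * t := by
      simp only [t, Finset.mul_sum, mul_left_comm]
    have hr : ∑ σ, ∑ μ, G σ μ * (- η σ μ * t) = -(Fintype.card ι * t) := by
      simp only [neg_mul, mul_neg, Finset.sum_neg_distrib, ← mul_assoc, ← Finset.sum_mul,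
        sum_sum_mul_eq_card_of_mul_transpose_eq_one hGηT]
    rwa [hl, hr] at h
  have hcard3 : (3 : ℝ) ≤ Fintype.card ι := by exact_mod_cast hcard
  have ht0 : t = 0 := by nlinarith
  ext σ μ
  have := hcontract σ μ
  rw [ht0, mul_zero] at this
  exact (mul_eq_zero.1 this).resolve_left (by linarith)

end LinearAlgebra

/-- `ψ` is left free: taking the trace of the equation forces `ψ = (2 / D) η^{μν} ∂_μ f_ν`. -/
def IsConformalKilling {D : ℕ} (η : Matrix (Fin D) (Fin D) ℝ) (f : Fin D → (Fin D → ℝ) → ℝ)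
    (ψ : (Fin D → ℝ) → ℝ) : Prop :=
  ∀ μ ν x, pd μ (f ν) x + pd ν (f μ) x = η μ ν * ψ x

namespace IsConformalKilling

variable {D : ℕ} {η : Matrix (Fin D) (Fin D) ℝ} {f : Fin D → (Fin D → ℝ) → ℝ}
  {ψ : (Fin D → ℝ) → ℝ}

theorem pd_pd_add_pd_pd (h : IsConformalKilling η f ψ) (hf : ∀ ν, ContDiff ℝ ∞ (f ν))
    (hψ : ContDiff ℝ ∞ ψ) (σ μ ν : Fin D) (x : Fin D → ℝ) :
    pd σ (pd μ (f ν)) x + pd σ (pd ν (f μ)) x = η μ ν * pd σ ψ x := by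
  have := congrArg (pd σ · x) (funext (h μ ν))
  rwa [pd_add (((hf ν).pd μ).differentiable (by simp) x)
    (((hf μ).pd ν).differentiable (by simp) x),
    pd_const_mul (hψ.differentiable (by simp) x)] at this

theorem two_mul_pd_pd (h : IsConformalKilling η f ψ) (hf : ∀ ν, ContDiff ℝ ∞ (f ν))
    (hψ : ContDiff ℝ ∞ ψ) (μ ν ρ : Fin D) (x : Fin D → ℝ) :
    2 * pd μ (pd ν (f ρ)) x = η ν ρ * pd μ ψ x + η ρ μ * pd ν ψ x - η μ ν * pd ρ ψ x := by
  linear_combination h.pd_pd_add_pd_pd hf hψ μ ν ρ x + h.pd_pd_add_pd_pd hf hψ ν ρ μ x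
    - h.pd_pd_add_pd_pd hf hψ ρ μ ν x - pd_comm (hf ρ) ν μ x - pd_comm (hf ν) μ ρ x
    - pd_comm (hf μ) ν ρ x

theorem two_mul_pd_pd_pd (h : IsConformalKilling η f ψ) (hf : ∀ ν, ContDiff ℝ ∞ (f ν))
    (hψ : ContDiff ℝ ∞ ψ) (σ μ ν ρ : Fin D) (x : Fin D → ℝ) :
    2 * pd σ (pd μ (pd ν (f ρ))) x
      = η ν ρ * pd σ (pd μ ψ) x + η ρ μ * pd σ (pd ν ψ) x - η μ ν * pd σ (pd ρ ψ) x := by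
  have := congrArg (pd σ · x) (funext (h.two_mul_pd_pd hf hψ μ ν ρ))
  have hψ' (i : Fin D) : Differentiable ℝ (pd i ψ) := (hψ.pd i).differentiable (by simp)
  rwa [pd_const_mul (((hf ρ).pd ν |>.pd μ).differentiable (by simp) x),
    pd_sub (by fun_prop) (by fun_prop), pd_add (by fun_prop) (by fun_prop),
    pd_const_mul (by fun_prop), pd_const_mul (by fun_prop), pd_const_mul (by fun_prop)] at this

theorem pd_pd_conformalFactor_eq_zero (hD : 2 < D) (hη : ∀ μ ν, η μ ν = η ν μ)
    (hdet : IsUnit η.det) (h : IsConformalKilling η f ψ) (hf : ∀ ν, ContDiff ℝ ∞ (f ν))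
    (hψ : ContDiff ℝ ∞ ψ) (a b : Fin D) (x : Fin D → ℝ) : pd a (pd b ψ) x = 0 := by
  have hH := eq_zero_of_exchange_symm (H := Matrix.of fun a b => pd a (pd b ψ) x)
    (by simpa using hD) hη hdet fun σ μ ν ρ => by
      simp only [of_apply]
      linear_combination -(h.two_mul_pd_pd_pd hf hψ σ μ ν ρ x
        - h.two_mul_pd_pd_pd hf hψ ν μ σ ρ x - 2 * pd_pd_pd_comm (hf ρ) σ μ ν x
        + η ρ μ * pd_comm hψ σ ν x)
  exact congrFun (congrFun hH a) b

theorem exists_eq_conformal_quadratic (hD : 2 < D) (hη : ∀ μ ν, η μ ν = η ν μ)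
    (hdet : IsUnit η.det) (h : IsConformalKilling η f ψ) (hf : ∀ ν, ContDiff ℝ ∞ (f ν))
    (hψ : ContDiff ℝ ∞ ψ) :
    ∃ (A : Matrix (Fin D) (Fin D) ℝ) (s : ℝ) (c : Fin D → ℝ), (∀ μ ν, A μ ν = -A ν μ) ∧
      ∀ x, (fun ρ => f ρ x) = (fun ρ => f ρ 0) + A *ᵥ x + s • η *ᵥ x
        + (x ⬝ᵥ η *ᵥ x) • c - (2 * (x ⬝ᵥ c)) • η *ᵥ x := by
  set g : Fin D → ℝ := fun j => pd j ψ 0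
  have hgrad (j : Fin D) (x : Fin D → ℝ) : pd j ψ x = g j :=
    eq_of_pd_eq_zero ((hψ.pd j).differentiable (by simp))
      (fun i y => h.pd_pd_conformalFactor_eq_zero hD hη hdet hf hψ i j y) x 0
  refine ⟨Matrix.of (fun ρ ν => pd ν (f ρ) 0) - (ψ 0 / 2) • η, ψ 0 / 2, -(1 / 4 : ℝ) • g,
    fun μ ν => ?_, fun x => ?_⟩
  · simp only [Matrix.sub_apply, Matrix.smul_apply, of_apply, smul_eq_mul]
    linear_combination h ν μ 0 + ψ 0 / 2 * hη ν μ
  ext ρ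
  have hquad := eq_quadratic_of_pd_pd_eq (hf ρ)
    ((1 / 2 : ℝ) • (vecMulVec g (η ρ) + vecMulVec (η ρ) g - g ρ • η))
    (fun a b y => by
      simp only [Matrix.smul_apply, Matrix.add_apply, Matrix.sub_apply, vecMulVec_apply,
        smul_eq_mul]
      linear_combination (h.two_mul_pd_pd hf hψ a b ρ y + η ρ a * hgrad b y
        + η b ρ * hgrad a y - η a b * hgrad ρ y + g a * hη b ρ) / 2) x
  rw [hquad]
  simp only [smul_mulVec, sub_mulVec, add_mulVec, vecMulVec_mulVec, op_smul_eq_smul,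
    dotProduct_smul, dotProduct_sub, dotProduct_add, smul_eq_mul, neg_smul, dotProduct_neg,
    Pi.sub_apply, Pi.add_apply, Pi.smul_apply, Pi.neg_apply]
  rw [dotProduct_comm x g, dotProduct_comm x (η ρ)]
  simp only [mulVec, of_apply]
  ring

end IsConformalKilling

/-- in flat space of dimension `D > 2` with nondegenerate symmetric metric
`η`, every smooth solution of the conformal Killing equation
`∂_μ k_ν + ∂_ν k_μ = (2/D) η_{μν} ∂_ρ k^ρ` is of the form
`k^μ(x) = ξ^μ + λ^μ{}_ν x^ν + λ_D x^μ + (x·x) Λ_K^μ − 2 x^μ (x·Λ_K)` with `λ_{μν}`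
antisymmetric (translations, Lorentz rotations, dilatations, special conformal
transformations). -/
theorem stmt_15 (D : ℕ) (hD : 2 < D) (η : Matrix (Fin D) (Fin D) ℝ)
    (hηsym : ∀ μ ν, η μ ν = η ν μ) (hηnd : IsUnit η.det)
    (k : (Fin D → ℝ) → (Fin D → ℝ)) (hk : ContDiff ℝ (⊤ : ℕ∞) k)
    (hck : ∀ μ ν x,
      pd μ (fun y => ∑ σ, η ν σ * k y σ) x + pd ν (fun y => ∑ σ, η μ σ * k y σ) x
        = (2 / (D : ℝ)) * η μ ν * ∑ ρ, pd ρ (fun y => k y ρ) x) :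
    ∃ (ξ : Fin D → ℝ) (lam : Fin D → Fin D → ℝ) (lamD : ℝ) (ΛK : Fin D → ℝ),
      (∀ μ ν, ∑ ρ, η μ ρ * lam ρ ν = - ∑ ρ, η ν ρ * lam ρ μ) ∧
      (∀ x μ, k x μ = ξ μ + (∑ ν, lam μ ν * x ν) + lamD * x μ
        + (∑ a, ∑ b, η a b * x a * x b) * ΛK μ
        - 2 * x μ * (∑ a, ∑ b, η a b * x a * ΛK b)) := by
  set f : Fin D → (Fin D → ℝ) → ℝ := fun ν y => (η *ᵥ k y) ν
  have hK : IsConformalKilling η f (fun x => 2 / D * ∑ ρ, pd ρ (fun y => k y ρ) x) :=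
    fun μ ν x => (hck μ ν x).trans (by ring)
  obtain ⟨A, s, c, hA, hfx⟩ := hK.exists_eq_conformal_quadratic hD hηsym hηnd
    (fun ν => by simp only [f, mulVec, dotProduct]; fun_prop)
    (contDiff_const.mul (ContDiff.sum fun ρ _ => (by fun_prop : ContDiff ℝ ∞ (k · ρ)).pd ρ))
  refine ⟨η⁻¹ *ᵥ (fun ρ => f ρ 0), η⁻¹ * A, s, η⁻¹ *ᵥ c, fun μ ν => ?_, fun x μ => ?_⟩
  · rw [← Matrix.mul_apply, ← Matrix.mul_apply, mul_nonsing_inv_cancel_left _ _ hηnd, hA]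
  have hkx : k x = η⁻¹ *ᵥ (fun ρ => f ρ x) := by
    rw [show (fun ρ => f ρ x) = η *ᵥ k x from rfl, mulVec_mulVec, nonsing_inv_mul _ hηnd,
      one_mulVec]
  rw [hkx, hfx x, ← dotProduct_mulVec_eq_sum_sum, ← dotProduct_mulVec_eq_sum_sum,
    show ∑ ν, (η⁻¹ * A) μ ν * x ν = ((η⁻¹ * A) *ᵥ x) μ from rfl]
  simp only [mulVec_add, mulVec_sub, mulVec_smul, mulVec_mulVec, nonsing_inv_mul _ hηnd,
    mul_nonsing_inv _ hηnd, one_mulVec, Pi.add_apply, Pi.sub_apply, Pi.smul_apply, smul_eq_mul]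
  ring
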